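/- No simplified counter machine accepts the language {a^m b^{2m} : m ∈ ℕ} in real time. (A simplified counter machine is one whose counter update function depends only on the input symbol and uses only updates in {-1, +0, +1, ×0}.) -/

import Mathlib

/-- A counter update: add an integer, or reset to zero (the ×0 operation). -/
inductive CUpd where
  | add (m : ℤ)
  | reset
deriving DecidableEq

def CUpd.apply : CUpd → ℤ → ℤ
  | .add m, c => c + m
  | .reset, _ => 0

/-- A general real-time counter machine with states `Fin n` and `k` counters. -/
structure CM (σ : Type) (n k : ℕ) where
  q0 : Fin n
  u : σ → Fin n → (Fin k → Bool) → Fin k → CUpd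
  δ : σ → Fin n → (Fin k → Bool) → Fin n
  F : Set (Fin n × (Fin k → Bool))

/-- Elementwise zero-check: `false` if the counter is 0, `true` otherwise. -/
def zcheck {k : ℕ} (c : Fin k → ℤ) : Fin k → Bool :=
  fun i => decide (c i ≠ 0)

def CM.step {σ : Type} {n k : ℕ} (M : CM σ n k) (cfg : Fin n × (Fin k → ℤ)) (x : σ) :
    Fin n × (Fin k → ℤ) :=
  (M.δ x cfg.1 (zcheck cfg.2), fun i => (M.u x cfg.1 (zcheck cfg.2) i).apply (cfg.2 i))

/-- Real-time run: start at `⟨q₀, 0⟩` and take one transition per input token. -/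
def CM.run {σ : Type} {n k : ℕ} (M : CM σ n k) (xs : List σ) : Fin n × (Fin k → ℤ) :=
  xs.foldl M.step (M.q0, fun _ => 0)

def CM.accepts {σ : Type} {n k : ℕ} (M : CM σ n k) (xs : List σ) : Prop :=
  ((M.run xs).1, zcheck (M.run xs).2) ∈ M.F

def CM.acceptsLang {σ : Type} {n k : ℕ} (M : CM σ n k) (L : Set (List σ)) : Prop :=
  ∀ xs, M.accepts xs ↔ xs ∈ L

/-- An update is incremental if it is `×0` or adds a value in `{-1, 0, +1}`. -/
def CUpd.incremental : CUpd → Prop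
  | .add m => m.natAbs ≤ 1
  | .reset => True

/-- A machine is simplified if its updates depend only on the input symbol and
are restricted to `{-1, +0, +1, ×0}`. -/
def CM.simplified {σ : Type} {n k : ℕ} (M : CM σ n k) : Prop :=
  (∀ x q q' b b', M.u x q b = M.u x q' b') ∧ ∀ x q b i, (M.u x q b i).incremental

/-- The class of languages accepted in real time by general counter machines. -/
def CL (σ : Type) : Set (Set (List σ)) :=
  {L | ∃ n k, ∃ M : CM σ n k, M.acceptsLang L}

inductive AB where
  | a
  | b
deriving DecidableEq

/-- The language `{aᵐ b²ᵐ : m ∈ ℕ}`. -/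
def Lab2 : Set (List AB) :=
  {xs | ∃ m : ℕ, xs = List.replicate m AB.a ++ List.replicate (2 * m) AB.b}

/-!
After `aᵐ` every counter of a simplified machine has absolute value at most `m`, and each `b`
resets a counter, leaves it alone, or moves it by `±1`; so once more than `m` letters `b` have been
read, the zero-check pattern no longer changes. From then on the state is driven by a fixed
self-map of the `n` states, which is periodic from the `n`-th iterate on, with some period `p > 0`.
For `m = n + 1` the words `aᵐ b²ᵐ` and `aᵐ b²ᵐ⁺ᵖ` therefore end in the same configuration,
but only the first lies in the language.
-/

namespace CUpd

theorem iterate_apply_add (e c : ℤ) (j : ℕ) : (add e).apply^[j] c = c + e * j := by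
  induction j with
  | zero => simp
  | succ j ih => rw [Function.iterate_succ_apply', ih, apply]; push_cast; ring

theorem iterate_apply_reset (c : ℤ) {j : ℕ} (hj : j ≠ 0) : reset.apply^[j] c = 0 := by
  obtain ⟨j, rfl⟩ := Nat.exists_eq_succ_of_ne_zero hj
  rw [Function.iterate_succ_apply', apply]

theorem abs_iterate_apply_le {u : CUpd} (hu : u.incremental) (c : ℤ) (j : ℕ) :
    |u.apply^[j] c| ≤ |c| + j := by
  cases u with
  | add e =>
    rw [iterate_apply_add]
    have he : |e| ≤ 1 := by
      rw [Int.abs_eq_natAbs]; exact_mod_cast (show e.natAbs ≤ 1 from hu)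
    calc |c + e * j| ≤ |c| + |e| * j := by
          simpa [abs_mul] using abs_add_le c (e * j)
      _ ≤ |c| + j := by gcongr; nlinarith [abs_nonneg e]
  | reset =>
    rcases eq_or_ne j 0 with rfl | hj
    · simp
    · rw [iterate_apply_reset c hj]; positivity

theorem iterate_apply_eq_zero_iff {v : CUpd} (hv : v.incremental) {c : ℤ} {j j' : ℕ}
    (hj : |c| < j) (hj' : |c| < j') : v.apply^[j] c = 0 ↔ v.apply^[j'] c = 0 := by
  cases v with
  | add e =>
    simp only [iterate_apply_add]
    have he : e = -1 ∨ e = 0 ∨ e = 1 := by simp only [incremental] at hv; omega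
    rw [abs_lt] at hj hj'
    rcases he with rfl | rfl | rfl <;> omega
  | reset =>
    have hc := abs_nonneg c
    rw [iterate_apply_reset c (by omega), iterate_apply_reset c (by omega)]

end CUpd

theorem Function.exists_iterate_card_add_eq {α : Type*} [Fintype α] (f : α → α) (x : α) :
    ∃ p, 0 < p ∧ f^[Fintype.card α + p] x = f^[Fintype.card α] x := by
  obtain ⟨s, t, hst, heq⟩ := Fintype.exists_ne_map_eq_of_card_lt
    (fun t : Fin (Fintype.card α + 1) => f^[t] x) (by simp)
  wlog hlt : s < t generalizing s t
  · exact this t s hst.symm heq.symm (by omega)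
  have hs : (s : ℕ) < t := hlt
  have ht : (t : ℕ) ≤ Fintype.card α := Nat.lt_succ_iff.mp t.isLt
  refine ⟨t - s, by omega, ?_⟩
  calc f^[Fintype.card α + (t - s)] x = f^[Fintype.card α - s] (f^[t] x) := by
        rw [← Function.iterate_add_apply]; congr 1; omega
    _ = f^[Fintype.card α - s] (f^[s] x) := by rw [heq]
    _ = f^[Fintype.card α] x := by
        rw [← Function.iterate_add_apply]; congr 1; omega

namespace CM

variable {σ : Type} {n k : ℕ} (M : CM σ n k)

theorem run_append (xs ys : List σ) : M.run (xs ++ ys) = ys.foldl M.step (M.run xs) :=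
  List.foldl_append

theorem run_append_replicate_succ (xs : List σ) (x : σ) (j : ℕ) :
    M.run (xs ++ List.replicate (j + 1) x) = M.step (M.run (xs ++ List.replicate j x)) x := by
  rw [List.replicate_succ', ← List.append_assoc, run_append]
  rfl

theorem run_nil_snd : (M.run []).2 = 0 := rfl

theorem run_append_replicate_snd {x : σ} {U : Fin k → CUpd} (hu : ∀ q b, M.u x q b = U)
    (xs : List σ) (j : ℕ) :
    (M.run (xs ++ List.replicate j x)).2 = fun i => (U i).apply^[j] ((M.run xs).2 i) := by
  induction j with
  | zero => simp
  | succ j ih =>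
    funext i
    rw [run_append_replicate_succ, Function.iterate_succ_apply']
    simp only [step, hu, ih]

theorem run_append_replicate_fst {xs : List σ} {x : σ} {b : Fin k → Bool}
    (hb : ∀ j, zcheck (M.run (xs ++ List.replicate j x)).2 = b) (j : ℕ) :
    (M.run (xs ++ List.replicate j x)).1 = (fun q => M.δ x q b)^[j] (M.run xs).1 := by
  induction j with
  | zero => simp
  | succ j ih =>
    rw [run_append_replicate_succ, Function.iterate_succ_apply', ← ih, ← hb j]
    rfl

theorem simplified.zcheck_run_replicate_append_replicate {M : CM σ n k} (hM : M.simplified)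
    (x y : σ) {m j j' : ℕ} (hj : m < j) (hj' : m < j') :
    zcheck (M.run (List.replicate m x ++ List.replicate j y)).2 =
      zcheck (M.run (List.replicate m x ++ List.replicate j' y)).2 := by
  have hu : ∀ z q b, M.u z q b = M.u z M.q0 0 := fun z q b => hM.1 z q M.q0 b 0
  rw [M.run_append_replicate_snd (hu y), M.run_append_replicate_snd (hu y),
    ← List.nil_append (List.replicate m x), M.run_append_replicate_snd (hu x), run_nil_snd]
  funext i
  have hc := CUpd.abs_iterate_apply_le (hM.2 x M.q0 0 i) 0 m
  rw [abs_zero, zero_add] at hc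
  simp only [zcheck, Pi.zero_apply, ne_eq,
    CUpd.iterate_apply_eq_zero_iff (hM.2 y M.q0 0 i) (c := (M.u x M.q0 0 i).apply^[m] 0)
      (j := j) (j' := j') (by omega) (by omega)]

end CM

theorem replicate_append_replicate_mem_Lab2_iff (m j : ℕ) :
    List.replicate m AB.a ++ List.replicate j AB.b ∈ Lab2 ↔ j = 2 * m := by
  constructor
  · rintro ⟨m', hm'⟩
    have hca := congrArg (List.count AB.a) hm'
    have hcb := congrArg (List.count AB.b) hm'
    simp only [List.count_append, List.count_replicate_self, List.count_replicate, beq_iff_eq,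
      reduceCtorEq, ↓reduceIte, add_zero, zero_add] at hca hcb
    omega
  · rintro rfl
    exact ⟨m, rfl⟩

/-- No simplified counter machine accepts `{aᵐ b²ᵐ}` in real time. -/
theorem stmt1 (n k : ℕ) (M : CM AB n k) (hM : M.simplified) : ¬ M.acceptsLang Lab2 := by
  intro hL
  set xs := List.replicate (n + 1) AB.a ++ List.replicate (n + 2) AB.b
  have hmem : ∀ j, xs ++ List.replicate j AB.b ∈ Lab2 ↔ j = n := fun j => by
    rw [List.append_assoc, ← List.replicate_add, replicate_append_replicate_mem_Lab2_iff]
    omega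
  set pattern := zcheck (M.run xs).2
  have hpattern : ∀ j, zcheck (M.run (xs ++ List.replicate j AB.b)).2 = pattern := fun j => by
    rw [List.append_assoc, ← List.replicate_add]
    exact hM.zcheck_run_replicate_append_replicate _ _ (by omega) (by omega)
  obtain ⟨p, hp, hperiod⟩ :=
    Function.exists_iterate_card_add_eq (fun q => M.δ AB.b q pattern) (M.run xs).1
  rw [Fintype.card_fin] at hperiod
  have hacc : M.accepts (xs ++ List.replicate (n + p) AB.b) ↔
      M.accepts (xs ++ List.replicate n AB.b) := by
    simp only [CM.accepts, hpattern, M.run_append_replicate_fst hpattern, hperiod]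
  have h := (hL _).symm.trans (hacc.trans (hL _))
  rw [hmem, hmem] at h
  omega
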